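/- arXiv:math/0403322 — 3 statements merged into one kernel-verified Lean document; each statement's English description precedes it below -/
import Mathlib

section
/- In a braided crossed G-category, if there exists an object X of degree e with γ_g(X) not isomorphic to X, then there is no invertible object of degree g. -/
open CategoryTheory MonoidalCategory

universe v u

/-- A braided crossed `G`-category: a monoidal category with a `G`-grading on objects,
a compatible monoidal `G`-action, and a crossed braiding. -/
structure BraidedCrossedGCat (G : Type*) [Group G] (C : Type u) [Category.{v} C]
    [MonoidalCategory C] where
  deg : C → G
  deg_tensor : ∀ X Y : C, deg (X ⊗ Y) = deg X * deg Y
  deg_unit : deg (𝟙_ C) = 1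
  deg_iso : ∀ {X Y : C}, (X ≅ Y) → deg X = deg Y
  act : G → C ⥤ C
  actOne : act 1 ≅ Functor.id C
  actMul : ∀ g h : G, act (g * h) ≅ act h ⋙ act g
  actTensor : ∀ (g : G) (X Y : C), (act g).obj (X ⊗ Y) ≅ (act g).obj X ⊗ (act g).obj Y
  act_deg : ∀ (g : G) (X : C), deg ((act g).obj X) = g * deg X * g⁻¹
  braiding : ∀ X Y : C, X ⊗ Y ≅ (act (deg X)).obj Y ⊗ X
  braiding_natural_right : ∀ (X : C) {Y Y' : C} (t : Y ⟶ Y'),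
    (X ◁ t) ≫ (braiding X Y').hom = (braiding X Y).hom ≫ ((act (deg X)).map t ▷ X)
  braiding_natural_left : ∀ {X X' : C} (s : X ⟶ X') (Y : C) (h : deg X = deg X'),
    (s ▷ Y) ≫ (braiding X' Y).hom =
      (braiding X Y).hom ≫ (eqToHom (by rw [h]) ▷ X) ≫ ((act (deg X')).obj Y ◁ s)
  hexagon₁ : ∀ X Z T : C,
    (braiding X (Z ⊗ T)).hom ≫ ((actTensor (deg X) Z T).hom ▷ X) =
      (α_ X Z T).inv ≫ ((braiding X Z).hom ▷ T) ≫
        (α_ ((act (deg X)).obj Z) X T).hom ≫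
        ((act (deg X)).obj Z ◁ (braiding X T).hom) ≫
        (α_ ((act (deg X)).obj Z) ((act (deg X)).obj T) X).inv
  hexagon₂ : ∀ X Y Z : C,
    (braiding (X ⊗ Y) Z).hom ≫
      ((eqToHom (by rw [deg_tensor]) ≫ (actMul (deg X) (deg Y)).hom.app Z) ▷ (X ⊗ Y)) =
      (α_ X Y Z).hom ≫ (X ◁ (braiding Y Z).hom) ≫
        (α_ X ((act (deg Y)).obj Z) Y).inv ≫
        ((braiding X ((act (deg Y)).obj Z)).hom ▷ Y) ≫
        (α_ ((act (deg X)).obj ((act (deg Y)).obj Z)) X Y).hom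
  braiding_equivariant : ∀ (k : G) (X Y : C),
    (actTensor k X Y).inv ≫ (act k).map (braiding X Y).hom ≫
      (actTensor k ((act (deg X)).obj Y) X).hom =
    (braiding ((act k).obj X) ((act k).obj Y)).hom ≫
      ((eqToHom (by rw [act_deg]; rfl) ≫ (actMul (k * deg X * k⁻¹) k).inv.app Y ≫
        eqToHom (by rw [inv_mul_cancel_right]) ≫ (actMul k (deg X)).hom.app Y) ▷
        (act k).obj X)

/-- An object of a monoidal category is invertible if it has a tensor-inverse. -/
def IsInvObj {C : Type u} [Category.{v} C] [MonoidalCategory C] (Y : C) : Prop :=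
  ∃ Y' : C, Nonempty (Y ⊗ Y' ≅ 𝟙_ C) ∧ Nonempty (Y' ⊗ Y ≅ 𝟙_ C)

/-! The crossed braiding conjugates by an invertible object `Y`:
`γ_{∂Y}(X) ≅ Y ⊗ X ⊗ Y⁻¹`. An object of degree `e` braids with everything through `γ_e ≅ id`,
so it commutes with `Y⁻¹`, and its conjugate by `Y` is isomorphic to itself. -/

def conjIsoSelf {C : Type u} [Category.{v} C] [MonoidalCategory C] {X Y Y' : C}
    (e : Y ⊗ Y' ≅ 𝟙_ C) (c : X ⊗ Y' ≅ Y' ⊗ X) : Y ⊗ X ⊗ Y' ≅ X :=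
  whiskerLeftIso Y c ≪≫ (α_ Y Y' X).symm ≪≫ whiskerRightIso e X ≪≫ λ_ X

namespace BraidedCrossedGCat

variable {G : Type*} [Group G] {C : Type u} [Category.{v} C] [MonoidalCategory C]
  (B : BraidedCrossedGCat G C)

def commIsoOfDegEqOne {X : C} (hX : B.deg X = 1) (Z : C) : X ⊗ Z ≅ Z ⊗ X :=
  B.braiding X Z ≪≫ whiskerRightIso (eqToIso (by rw [hX]) ≪≫ B.actOne.app Z) X

def actDegIsoConj {Y Y' : C} (e : Y ⊗ Y' ≅ 𝟙_ C) (X : C) :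
    (B.act (B.deg Y)).obj X ≅ Y ⊗ X ⊗ Y' :=
  (ρ_ _).symm ≪≫ whiskerLeftIso _ e.symm ≪≫ (α_ _ _ _).symm ≪≫
    whiskerRightIso (B.braiding Y X).symm Y' ≪≫ α_ Y X Y'

end BraidedCrossedGCat

/-- In a braided crossed `G`-category, if there exists an object `X` of
degree `e` with `γ_g(X) ≇ X`, then there is no invertible object of degree `g`. -/
theorem stmt_1 {G : Type*} [Group G] {C : Type u} [Category.{v} C] [MonoidalCategory C]
    (B : BraidedCrossedGCat G C) (g : G)
    (hX : ∃ X : C, B.deg X = 1 ∧ IsEmpty ((B.act g).obj X ≅ X)) :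
    ¬ ∃ Y : C, B.deg Y = g ∧ IsInvObj Y := by
  rintro ⟨Y, rfl, Y', ⟨e⟩, -⟩
  obtain ⟨X, hX1, hX⟩ := hX
  exact hX.false <|
    B.actDegIsoConj e X ≪≫ conjIsoSelf e (B.commIsoOfDegEqOne hX1 Y')
end

section
/- Let C be a braided crossed G-category, X ∈ C_e, Y ∈ C_g invertible with inverse Y'. Then X ≅ (X ⊗ Y) ⊗ Y' ≅ (γ_g(X) ⊗ Y) ⊗ Y' ≅ γ_g(X), the middle isomorphism being c_{Y,X} ∘ c_{X,Y}. -/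
open CategoryTheory MonoidalCategory

universe v u

/-- Explicit chain of isomorphisms proving the obstruction lemma:
for `X` of degree `e` and `Y` invertible of degree `g` (with inverse `Y'`),
`X ≅ (X ⊗ Y) ⊗ Y' ≅ (γ_g(X) ⊗ Y) ⊗ Y' ≅ γ_g(X)`, the middle isomorphism being
`c_{Y,X} ∘ c_{X,Y}` (with the canonical identifications `γ_{∂X} = γ_e = id`). -/
theorem stmt_16 {G : Type*} [Group G] {C : Type u} [Category.{v} C] [MonoidalCategory C]
    (B : BraidedCrossedGCat G C) (g : G) (X Y Y' : C)
    (hX : B.deg X = 1) (hY : B.deg Y = g)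
    (e : Y ⊗ Y' ≅ 𝟙_ C) (e' : Y' ⊗ Y ≅ 𝟙_ C) :
    Nonempty (X ≅ (X ⊗ Y) ⊗ Y') ∧
    IsIso ((B.braiding X Y).hom ≫
      ((eqToHom (by rw [hX]) ≫ B.actOne.hom.app Y) ▷ X) ≫
      (B.braiding Y X).hom ≫ (eqToHom (by rw [hY]) ▷ Y) :
        X ⊗ Y ⟶ (B.act g).obj X ⊗ Y) ∧
    Nonempty (((B.act g).obj X ⊗ Y) ⊗ Y' ≅ (B.act g).obj X) ∧
    Nonempty ((B.act g).obj X ≅ X) := by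
  have i1 : X ≅ (X ⊗ Y) ⊗ Y' :=
    (ρ_ X).symm ≪≫ whiskerLeftIso X e.symm ≪≫ (α_ X Y Y').symm
  have i3 : ((B.act g).obj X ⊗ Y) ⊗ Y' ≅ (B.act g).obj X :=
    (α_ _ Y Y') ≪≫ whiskerLeftIso _ e ≪≫ (ρ_ _)
  let f : X ⊗ Y ⟶ (B.act g).obj X ⊗ Y := (B.braiding X Y).hom ≫
      ((eqToHom (by rw [hX]) ≫ B.actOne.hom.app Y) ▷ X) ≫
      (B.braiding Y X).hom ≫ (eqToHom (by rw [hY]) ▷ Y)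
  have h2 : IsIso f := by dsimp only [f]; infer_instance
  exact ⟨⟨i1⟩, h2, ⟨i3⟩, ⟨(i1 ≪≫ whiskerRightIso (asIso f) Y' ≪≫ i3).symm⟩⟩
end

section
/- Let D be a braided monoidal category with a permutation action of a group G ⊆ S_n on the n-fold Deligne/direct product C^{⊠n} of a semisimple category C, permuting the tensor factors. If C has a simple object σ not isomorphic to the unit, and g ∈ G satisfies g ≠ e, then there exists a simple object X of C^{⊠n} with γ_g(X) ≇ X; consequently, in any braided crossed G-category with degree-e part equivalent (G-equivariantly) to C^{⊠n}, there is no invertible object of degree g. -/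
open CategoryTheory MonoidalCategory

universe v u

/-!
An invertible object `Y` of degree `g` makes `γ_g` trivial on degree-`e` objects: for such `X`
the crossed braiding gives `X ⊗ Y ≅ Y ⊗ X ≅ γ_g(X) ⊗ Y`, and tensoring with the inverse of `Y`
cancels it. On the other hand a permutation `g ≠ e` moves some index `i`, so the tuple with a
non-unit simple in slot `g i` and the unit elsewhere is not fixed by `γ_g`.
-/

theorem Equiv.Perm.exists_comp_ne {α ι : Type*} [Nontrivial ι] {p : Equiv.Perm α}
    (hp : p ≠ 1) : ∃ x : α → ι, (fun i => x (p i)) ≠ x := by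
  classical
  obtain ⟨i, hi⟩ : ∃ i, p i ≠ i := by
    by_contra! h
    exact hp (Equiv.ext h)
  obtain ⟨a, b, hab⟩ := exists_pair_ne ι
  refine ⟨Function.update (fun _ => b) (p i) a, fun h => hab ?_⟩
  simpa [Function.update_of_ne hi.symm] using congrFun h i

namespace CategoryTheory.MonoidalCategory

variable {D : Type u} [Category.{v} D] [MonoidalCategory D]

def cancelRightIso {X X' Y Y' : D} (f : X ⊗ Y ≅ X' ⊗ Y) (e : Y ⊗ Y' ≅ 𝟙_ D) : X ≅ X' :=
  (ρ_ X).symm ≪≫ whiskerLeftIso X e.symm ≪≫ (α_ X Y Y').symm ≪≫ whiskerRightIso f Y' ≪≫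
    α_ X' Y Y' ≪≫ whiskerLeftIso X' e ≪≫ ρ_ X'

end CategoryTheory.MonoidalCategory

namespace BraidedCrossedGCat

variable {G : Type*} [Group G] {D : Type u} [Category.{v} D] [MonoidalCategory D]
  (B : BraidedCrossedGCat G D)

def braidingOfDegEqOne {X : D} (hX : B.deg X = 1) (Y : D) : X ⊗ Y ≅ Y ⊗ X :=
  B.braiding X Y ≪≫ whiskerRightIso (eqToIso (by rw [hX]) ≪≫ B.actOne.app Y) X

def actIsoOfDegEqOne {X Y Y' : D} (hX : B.deg X = 1) (e : Y ⊗ Y' ≅ 𝟙_ D) :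
    (B.act (B.deg Y)).obj X ≅ X :=
  cancelRightIso ((B.braiding Y X).symm ≪≫ (B.braidingOfDegEqOne hX Y).symm) e

end BraidedCrossedGCat

/-- Let `G ⊆ S_n` act by permutation on the simple objects of the `n`-fold
product `C^{⊠n}` (modelled by tuples of isomorphism classes of simples of `C`). If `C` has
a simple object `σ₀` not isomorphic to the unit object and `g ≠ e`, then some simple object
of `C^{⊠n}` is not isomorphic to its `γ_g`-image; consequently, in any braided crossed
`G`-category whose degree-`e` simples are `G`-equivariantly identified with those of
`C^{⊠n}`, there is no invertible object of degree `g`. -/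
theorem stmt_17 (n : ℕ) (ι : Type*) (σ₀ unitCl : ι) (hσ : σ₀ ≠ unitCl)
    {D : Type u} [Category.{v} D] [MonoidalCategory D]
    (G : Subgroup (Equiv.Perm (Fin n)))
    (B : BraidedCrossedGCat G D)
    -- `Φ x` realizes the simple object of `C^{⊠n}` with components in classes `x`
    (Φ : (Fin n → ι) → D)
    (hdeg : ∀ x : Fin n → ι, B.deg (Φ x) = 1)
    (hequiv : ∀ (g : G) (x : Fin n → ι),
      Nonempty ((B.act g).obj (Φ x) ≅ Φ (fun i => x (((g : Equiv.Perm (Fin n)))⁻¹ i))))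
    (hinj : ∀ x y : Fin n → ι, Nonempty (Φ x ≅ Φ y) → x = y)
    (g : G) (hg : g ≠ 1) :
    (∃ x : Fin n → ι, (fun i => x (((g : Equiv.Perm (Fin n)))⁻¹ i)) ≠ x ∧
      IsEmpty ((B.act g).obj (Φ x) ≅ Φ x)) ∧
    ¬ ∃ Y : D, B.deg Y = g ∧ IsInvObj Y := by
  have : Nontrivial ι := ⟨σ₀, unitCl, hσ⟩
  have hg' : (g : Equiv.Perm (Fin n))⁻¹ ≠ 1 := inv_ne_one.mpr (by simpa using hg)
  obtain ⟨x, hx⟩ := Equiv.Perm.exists_comp_ne (ι := ι) hg'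
  have hnot : IsEmpty ((B.act g).obj (Φ x) ≅ Φ x) :=
    ⟨fun e => hx (hinj _ _ ⟨(hequiv g x).some.symm ≪≫ e⟩)⟩
  refine ⟨⟨x, hx, hnot⟩, ?_⟩
  rintro ⟨Y, rfl, Y', ⟨e⟩, -⟩
  exact hnot.false (B.actIsoOfDegEqOne (hdeg x) e)
end
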